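/- Let q be a Boolean conjunctive query, Dˣ a set of exogenous tuples with Dˣ ⊭ q, and Dⁿ a set of candidate missing endogenous tuples with Dˣ ∪ Dⁿ ⊨ q. Then a tuple t ∈ Dⁿ is an actual Why-No cause for q if and only if there exists a non-redundant member c of the n-lineage of q on Dˣ ∪ Dⁿ with t ∈ c. -/

import Mathlib

/-- An atom of a Boolean conjunctive query: a relation symbol applied to a
tuple (list) of variables, marked endogenous (`endo = true`) or exogenous. -/
structure DBAtom (Rel Var : Type) where
  rel : Rel
  args : List Var
  endo : Bool
deriving DecidableEq

/-- A database tuple: it belongs to one relation and carries a tuple of constants. -/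
structure DBTup (Rel Const : Type) where
  rel : Rel
  args : List Const
deriving DecidableEq

/-- The tuple obtained by applying a valuation `θ` to an atom. -/
def DBAtom.app {Rel Var Const : Type} (g : DBAtom Rel Var) (θ : Var → Const) :
    DBTup Rel Const :=
  ⟨g.rel, g.args.map θ⟩

/-- `dbSat D q` holds iff `D ⊨ q`: there is a valuation `θ` of the variables of `q`
into the domain with `θ(g) ∈ D` for every atom `g` of `q`. -/
def dbSat {Rel Var Const : Type} (D : Finset (DBTup Rel Const))
    (q : Finset (DBAtom Rel Var)) : Prop :=
  ∃ θ : Var → Const, ∀ g ∈ q, g.app θ ∈ D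

/-- `t` is an actual cause for `q` in `D` (with endogenous tuples `Dn`):
there is a contingency set `Γ ⊆ Dn` with `t ∉ Γ` such that
`D − Γ ⊨ q` and `D − Γ − {t} ⊭ q`. -/
def isActualCause {Rel Var Const : Type} [DecidableEq Rel] [DecidableEq Const]
    (q : Finset (DBAtom Rel Var)) (D Dn : Finset (DBTup Rel Const))
    (t : DBTup Rel Const) : Prop :=
  ∃ Γ : Finset (DBTup Rel Const), Γ ⊆ Dn ∧ t ∉ Γ ∧
    dbSat (D \ Γ) q ∧ ¬ dbSat ((D \ Γ).erase t) q

/-- The n-lineage of `q` on `D`: the family of the sets `c^θ ∩ Dⁿ`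
over all valuations `θ` with `θ(g) ∈ D` for all atoms `g` of `q`, where
`c^θ = {θ(g) : g an atom of q}`. -/
def nLineage {Rel Var Const : Type} [DecidableEq Rel] [DecidableEq Const]
    (q : Finset (DBAtom Rel Var)) (D Dn : Finset (DBTup Rel Const)) :
    Set (Finset (DBTup Rel Const)) :=
  {c | ∃ θ : Var → Const, (∀ g ∈ q, g.app θ ∈ D) ∧
    c = (q.image fun g => g.app θ) ∩ Dn}

/-- `t ∈ Dn` is an actual Why-No cause for `q` (with actual database `Dˣ` and
candidate missing tuples `Dⁿ`): there is a contingency set `Γ ⊆ Dⁿ` with `t ∉ Γ`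
such that `Dˣ ∪ Γ ⊭ q` and `Dˣ ∪ Γ ∪ {t} ⊨ q`. -/
def isWhyNoCause {Rel Var Const : Type} [DecidableEq Rel] [DecidableEq Const]
    (q : Finset (DBAtom Rel Var)) (Dx Dn : Finset (DBTup Rel Const))
    (t : DBTup Rel Const) : Prop :=
  ∃ Γ : Finset (DBTup Rel Const), Γ ⊆ Dn ∧ t ∉ Γ ∧
    ¬ dbSat (Dx ∪ Γ) q ∧ dbSat (insert t (Dx ∪ Γ)) q

/-!
Since `Dˣ` and `Dⁿ` are disjoint, `Dˣ ∪ Γ ⊨ q` for `Γ ⊆ Dⁿ` holds exactly when some member of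
the n-lineage lies inside `Γ`. So `t` is a Why-No cause iff some `Γ ∌ t` contains no lineage
member while `Γ ∪ {t}` contains one, a property of the set family alone: it holds iff `t` lies
in a minimal member (take `Γ = c ∖ {t}` for a minimal `c ∋ t`; conversely a minimal member
below the one inside `Γ ∪ {t}` must contain `t`).
-/

section SetFamily

variable {α : Type*} [DecidableEq α]

theorem exists_minimal_mem_iff_exists_avoiding_insert_covering
    {L : Set (Finset α)} {U : Finset α} (hL : ∀ c ∈ L, c ⊆ U) (t : α) :
    (∃ c, Minimal (· ∈ L) c ∧ t ∈ c) ↔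
      ∃ Γ ⊆ U, t ∉ Γ ∧ (∀ c ∈ L, ¬ c ⊆ Γ) ∧ ∃ c ∈ L, c ⊆ insert t Γ := by
  constructor
  · rintro ⟨c, hc, htc⟩
    refine ⟨c.erase t, (c.erase_subset t).trans (hL c hc.prop), c.notMem_erase t,
      fun c' hc' hsub => hc.not_lt hc' (hsub.trans_ssubset (c.erase_ssubset htc)), c, hc.prop,
      Finset.insert_erase_subset t c⟩
  · rintro ⟨Γ, -, -, hΓ, c, hc, hcsub⟩
    obtain ⟨m, hmc, hm⟩ := exists_minimal_le_of_wellFoundedLT (· ∈ L) c hc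
    refine ⟨m, hm, by_contra fun htm => hΓ m hm.prop ?_⟩
    exact (Finset.subset_insert_iff_of_notMem htm).1 (hmc.trans hcsub)

end SetFamily

section Lineage

variable {Rel Var Const : Type} [DecidableEq Rel] [DecidableEq Const]

theorem dbSat_union_iff_exists_nLineage_subset {q : Finset (DBAtom Rel Var)}
    {Dx Dn Γ : Finset (DBTup Rel Const)} (hdisj : Disjoint Dx Dn) (hΓ : Γ ⊆ Dn) :
    dbSat (Dx ∪ Γ) q ↔ ∃ c ∈ nLineage q (Dx ∪ Dn) Dn, c ⊆ Γ := by
  constructor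
  · rintro ⟨θ, hθ⟩
    refine ⟨_, ⟨θ, fun g hg => Finset.union_subset_union_right hΓ (hθ g hg), rfl⟩, ?_⟩
    intro x hx
    obtain ⟨hxq, hxn⟩ := Finset.mem_inter.1 hx
    obtain ⟨g, hg, rfl⟩ := Finset.mem_image.1 hxq
    exact (Finset.mem_union.1 (hθ g hg)).resolve_left (Finset.disjoint_right.1 hdisj hxn)
  · rintro ⟨c, ⟨θ, hθ, rfl⟩, hsub⟩
    refine ⟨θ, fun g hg => ?_⟩
    rcases Finset.mem_union.1 (hθ g hg) with hx | hn
    · exact Finset.mem_union_left _ hx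
    · exact Finset.mem_union_right _
        (hsub (Finset.mem_inter.2 ⟨Finset.mem_image_of_mem _ hg, hn⟩))

theorem nLineage_subset {q : Finset (DBAtom Rel Var)} {D Dn : Finset (DBTup Rel Const)} :
    ∀ c ∈ nLineage q D Dn, c ⊆ Dn := by
  rintro c ⟨θ, -, rfl⟩
  exact Finset.inter_subset_right

end Lineage

theorem statement2_general {Rel Var Const : Type}
    [DecidableEq Rel] [DecidableEq Const]
    (q : Finset (DBAtom Rel Var)) (Dx Dn : Finset (DBTup Rel Const))
    (hdisj : Disjoint Dx Dn)
    (t : DBTup Rel Const) (ht : t ∈ Dn) :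
    isWhyNoCause q Dx Dn t ↔
      ∃ c ∈ nLineage q (Dx ∪ Dn) Dn,
        (∀ c' ∈ nLineage q (Dx ∪ Dn) Dn, ¬ c' ⊂ c) ∧ t ∈ c := by
  set L := nLineage q (Dx ∪ Dn) Dn
  have hsat : ∀ Γ ⊆ Dn, dbSat (Dx ∪ Γ) q ↔ ∃ c ∈ L, c ⊆ Γ := fun Γ hΓ =>
    dbSat_union_iff_exists_nLineage_subset hdisj hΓ
  have hcause : isWhyNoCause q Dx Dn t ↔
      ∃ Γ ⊆ Dn, t ∉ Γ ∧ (∀ c ∈ L, ¬ c ⊆ Γ) ∧ ∃ c ∈ L, c ⊆ insert t Γ := by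
    refine exists_congr fun Γ => and_congr_right fun hΓ => and_congr_right fun _ => ?_
    rw [← Finset.union_insert, hsat Γ hΓ, hsat _ (Finset.insert_subset ht hΓ)]
    simp only [not_exists, not_and]
  rw [hcause, ← exists_minimal_mem_iff_exists_avoiding_insert_covering nLineage_subset t]
  refine exists_congr fun c => ?_
  rw [minimal_iff_forall_lt, and_assoc]
  exact and_congr_right fun _ => and_congr_left'
    ⟨fun h c' hc' hlt => h hlt hc', fun h _ hlt hc' => h _ hc' hlt⟩

/-- Let `q` be a Boolean conjunctive query, `Dˣ` a set of exogenous
tuples with `Dˣ ⊭ q`, and `Dⁿ` a set of candidate missing endogenous tuples with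
`Dˣ ∪ Dⁿ ⊨ q`. Then `t ∈ Dⁿ` is an actual Why-No cause for `q` iff there exists a
non-redundant member `c` of the n-lineage of `q` on `Dˣ ∪ Dⁿ` with `t ∈ c`. -/
theorem statement2 {Rel Var Const : Type}
    [DecidableEq Rel] [DecidableEq Var] [DecidableEq Const]
    (q : Finset (DBAtom Rel Var)) (Dx Dn : Finset (DBTup Rel Const))
    (hdisj : Disjoint Dx Dn)
    (hx : ¬ dbSat (Const := Const) Dx q) (hD : dbSat (Dx ∪ Dn) q)
    (t : DBTup Rel Const) (ht : t ∈ Dn) :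
    isWhyNoCause q Dx Dn t ↔
      ∃ c ∈ nLineage q (Dx ∪ Dn) Dn,
        (∀ c' ∈ nLineage q (Dx ∪ Dn) Dn, ¬ c' ⊂ c) ∧ t ∈ c :=
  statement2_general q Dx Dn hdisj t ht
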